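/- Comonoid homomorphisms between commutative †-Frobenius monoids correspond exactly to functions between their sets of copyable elements: every comonoid homomorphism f : H → K (a linear map with δ_K ∘ f = (f ⊗ f) ∘ δ_H and ε_K ∘ f = ε_H) maps copyable elements of H to copyable elements of K, and the resulting restriction map, from the set of comonoid homomorphisms H → K to the set of functions from the copyable elements of (H, m_H, u_H) to the copyable elements of (K, m_K, u_K), is a bijection. -/

import Mathlib

noncomputable section

open scoped TensorProduct ComplexConjugate InnerProductSpace

open scoped TensorProduct ComplexConjugate InnerProductSpace

variable {H : Type*} [NormedAddCommGroup H] [InnerProductSpace ℂ H] [FiniteDimensional ℂ H]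

namespace TensorIP

variable (H) in
/-- A basis of `H ⊗ H` built from an orthonormal basis of `H`. -/
def tb : Module.Basis (Fin (Module.finrank ℂ H) × Fin (Module.finrank ℂ H)) ℂ (H ⊗[ℂ] H) :=
  Module.Basis.tensorProduct (stdOrthonormalBasis ℂ H).toBasis (stdOrthonormalBasis ℂ H).toBasis

variable (H) in
/-- The canonical inner product space structure on `H ⊗ H`, which is determined by
`⟪a ⊗ b, c ⊗ d⟫ = ⟪a,c⟫ * ⟪b,d⟫` (see `TensorIP.inner_tmul` below). -/
def core : InnerProductSpace.Core ℂ (H ⊗[ℂ] H) where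
  inner x y := ∑ p, conj ((tb H).repr x p) * ((tb H).repr y p)
  conj_inner_symm x y := by
    simp only [map_sum, map_mul, starRingEnd_self_apply]
    exact Finset.sum_congr rfl fun p _ => by ring
  re_inner_nonneg x := by
    show 0 ≤ RCLike.re (∑ p, conj ((tb H).repr x p) * ((tb H).repr x p))
    have h : ∀ p : Fin (Module.finrank ℂ H) × Fin (Module.finrank ℂ H),
        conj ((tb H).repr x p) * ((tb H).repr x p)
          = ((Complex.normSq ((tb H).repr x p) : ℝ) : ℂ) := fun p => by
      rw [mul_comm, Complex.mul_conj]
    simp only [h]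
    rw [map_sum]
    refine Finset.sum_nonneg fun p _ => ?_
    simp [Complex.normSq_nonneg]
  add_left x y z := by
    simp only [map_add, Finsupp.add_apply]
    rw [← Finset.sum_add_distrib]
    exact Finset.sum_congr rfl fun p _ => by ring
  smul_left x y r := by
    simp only [map_smul, Finsupp.smul_apply, smul_eq_mul, map_mul, Finset.mul_sum]
    exact Finset.sum_congr rfl fun p _ => by ring
  definite x hx := by
    have hx' : ∑ p, conj ((tb H).repr x p) * ((tb H).repr x p) = 0 := hx
    have h2 : ∑ p, ((Complex.normSq ((tb H).repr x p) : ℝ) : ℂ) = 0 := by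
      rw [← hx']
      exact Finset.sum_congr rfl fun p _ => by rw [mul_comm, Complex.mul_conj]
    have h3 : ∑ p, Complex.normSq ((tb H).repr x p) = 0 := by exact_mod_cast h2
    have h4 : ∀ p ∈ Finset.univ, Complex.normSq ((tb H).repr x p) = 0 :=
      (Finset.sum_eq_zero_iff_of_nonneg fun p _ => Complex.normSq_nonneg _).mp h3
    have h5 : (tb H).repr x = 0 := by
      ext p
      exact Complex.normSq_eq_zero.mp (h4 p (Finset.mem_univ p))
    simpa using (tb H).repr.map_eq_zero_iff.mp h5

instance : NormedAddCommGroup (H ⊗[ℂ] H) :=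
  @InnerProductSpace.Core.toNormedAddCommGroup ℂ (H ⊗[ℂ] H) _ _ _ (core H)

instance : InnerProductSpace ℂ (H ⊗[ℂ] H) := InnerProductSpace.ofCore (core H).toCore

theorem inner_tmul (a b c d : H) :
    @inner ℂ (H ⊗[ℂ] H) InnerProductSpace.toInner (a ⊗ₜ[ℂ] b) (c ⊗ₜ[ℂ] d) = ⟪a, c⟫_ℂ * ⟪b, d⟫_ℂ := by
  have key : ∀ (x y : H) (p : Fin (Module.finrank ℂ H) × Fin (Module.finrank ℂ H)),
      (tb H).repr (x ⊗ₜ[ℂ] y) p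
        = ⟪(stdOrthonormalBasis ℂ H) p.1, x⟫_ℂ * ⟪(stdOrthonormalBasis ℂ H) p.2, y⟫_ℂ := by
    rintro x y ⟨i, j⟩
    rw [tb, Module.Basis.tensorProduct_repr_tmul_apply, smul_eq_mul,
      OrthonormalBasis.coe_toBasis_repr_apply, OrthonormalBasis.coe_toBasis_repr_apply,
      OrthonormalBasis.repr_apply_apply, OrthonormalBasis.repr_apply_apply, mul_comm]
  show (∑ p, conj ((tb H).repr (a ⊗ₜ[ℂ] b) p) * ((tb H).repr (c ⊗ₜ[ℂ] d) p)) = _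
  simp only [key, map_mul]
  rw [← Finset.univ_product_univ, Finset.sum_product]
  have h : ∀ i j : Fin (Module.finrank ℂ H),
      (conj ⟪(stdOrthonormalBasis ℂ H) i, a⟫_ℂ * conj ⟪(stdOrthonormalBasis ℂ H) j, b⟫_ℂ) *
        (⟪(stdOrthonormalBasis ℂ H) i, c⟫_ℂ * ⟪(stdOrthonormalBasis ℂ H) j, d⟫_ℂ)
      = (⟪a, (stdOrthonormalBasis ℂ H) i⟫_ℂ * ⟪(stdOrthonormalBasis ℂ H) i, c⟫_ℂ) *
        (⟪b, (stdOrthonormalBasis ℂ H) j⟫_ℂ * ⟪(stdOrthonormalBasis ℂ H) j, d⟫_ℂ) := by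
    intro i j
    rw [inner_conj_symm, inner_conj_symm]; ring
  simp only [h]
  rw [← Finset.sum_mul_sum]
  rw [OrthonormalBasis.sum_inner_mul_inner, OrthonormalBasis.sum_inner_mul_inner]

end TensorIP

/-- `(H, m, u)` is a commutative †-Frobenius monoid: `m` is associative and commutative,
`u 1` is a two-sided unit for `m`, and the Frobenius law
`(m ⊗ id) ∘ (id ⊗ δ) = δ ∘ m` holds, where `δ := m†`. -/
def IsFrobenius (m : H ⊗[ℂ] H →ₗ[ℂ] H) (u : ℂ →ₗ[ℂ] H) : Prop :=
  (m ∘ₗ TensorProduct.map m LinearMap.id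
      = m ∘ₗ TensorProduct.map LinearMap.id m ∘ₗ (TensorProduct.assoc ℂ H H H).toLinearMap)
    ∧ (m ∘ₗ (TensorProduct.comm ℂ H H).toLinearMap = m)
    ∧ (∀ x : H, m (u 1 ⊗ₜ[ℂ] x) = x)
    ∧ (∀ x : H, m (x ⊗ₜ[ℂ] u 1) = x)
    ∧ (TensorProduct.map m LinearMap.id ∘ₗ (TensorProduct.assoc ℂ H H H).symm.toLinearMap
        ∘ₗ TensorProduct.map LinearMap.id (LinearMap.adjoint m)
      = LinearMap.adjoint m ∘ₗ m)

/-- `ψ` is a copyable element: `δ ψ = ψ ⊗ ψ` and `ε ψ = 1`, where `δ := m†`, `ε := u†`. -/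
def Copyable (m : H ⊗[ℂ] H →ₗ[ℂ] H) (u : ℂ →ₗ[ℂ] H) (ψ : H) : Prop :=
  LinearMap.adjoint m ψ = ψ ⊗ₜ[ℂ] ψ ∧ LinearMap.adjoint u ψ = 1

/-!
Through `m` and `u 1`, `H` is a finite-dimensional commutative ℂ-algebra, and `ψ` is copyable
exactly when `⟪ψ, -⟫` is a character of it; by Riesz representation, copyables and characters
correspond. Taking adjoints in the Frobenius law gives `L_a† = L_{a'}` with `a' = L_a† (u 1)` for
the left multiplications `L_a`, so every `L_a` is normal, and since a normal operator with square
zero vanishes, the algebra is reduced. In a reduced finite-dimensional algebra over an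
algebraically closed field the characters separate points (its Jacobson radical is its
nilradical), so the copyables span `H`; distinct characters are linearly independent (Dedekind),
so the copyables form a basis of `H`. A linear map is a comonoid homomorphism iff it sends
copyables to copyables, so comonoid homomorphisms are exactly the linear extensions of
arbitrary functions between the sets of copyables.
-/

namespace LinearMap

variable {𝕜 E : Type*} [RCLike 𝕜] [NormedAddCommGroup E] [InnerProductSpace 𝕜 E]
  [FiniteDimensional 𝕜 E]

theorem ker_adjoint_eq_ker_of_isStarNormal {T : E →ₗ[𝕜] E} (hT : IsStarNormal T) :
    ker (adjoint T) = ker T := by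
  have hcomm : adjoint T ∘ₗ T = T ∘ₗ adjoint T := by
    simpa [star_eq_adjoint, Commute, SemiconjBy, Module.End.mul_eq_comp] using hT.star_comm_self
  rw [← ker_self_comp_adjoint, ← hcomm, ker_adjoint_comp_self]

theorem eq_zero_of_isStarNormal_of_mul_self_eq_zero {T : E →ₗ[𝕜] E} (hT : IsStarNormal T)
    (hT2 : T * T = 0) : T = 0 := by
  ext x
  have hTx : adjoint T (T x) = 0 := by
    rw [← mem_ker, ker_adjoint_eq_ker_of_isStarNormal hT, mem_ker, ← Module.End.mul_apply, hT2,
      zero_apply]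
  rw [zero_apply, ← inner_self_eq_zero (𝕜 := 𝕜), ← adjoint_inner_left, hTx, inner_zero_left]

end LinearMap

theorem IsAlgClosed.eq_zero_of_forall_algHom_apply_eq_zero {k A : Type*} [Field k] [IsAlgClosed k]
    [CommRing A] [IsReduced A] [Algebra k A] [Module.Finite k A] {x : A}
    (hx : ∀ χ : A →ₐ[k] k, χ x = 0) : x = 0 := by
  have : IsArtinianRing A := isArtinian_of_tower k inferInstance
  have hmax : ∀ I : Ideal A, I.IsMaximal → x ∈ I := by
    intro I hI
    let := Ideal.Quotient.field I
    have : Module.Finite k (A ⧸ I) :=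
      Module.Finite.of_surjective (Ideal.Quotient.mkₐ k I).toLinearMap
        (Ideal.Quotient.mkₐ_surjective k I)
    let e : k ≃ₐ[k] A ⧸ I :=
      AlgEquiv.ofBijective (Algebra.ofId k _) algebraMap_bijective_of_isIntegral
    simpa [Ideal.Quotient.eq_zero_iff_mem] using
      hx (e.symm.toAlgHom.comp (Ideal.Quotient.mkₐ k I))
  have hjac : x ∈ (⊥ : Ideal A).jacobson := Ideal.mem_sInf.mpr fun I hI => hmax I hI.2
  rw [IsArtinianRing.jacobson_eq_radical] at hjac
  exact (mem_nilradical.mp hjac).eq_zero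

namespace TensorIP

theorem tb_apply (p : Fin (Module.finrank ℂ H) × Fin (Module.finrank ℂ H)) :
    tb H p = stdOrthonormalBasis ℂ H p.1 ⊗ₜ stdOrthonormalBasis ℂ H p.2 := by
  simp [tb, Module.Basis.tensorProduct_apply']

theorem adjoint_map (A B : H →ₗ[ℂ] H) :
    LinearMap.adjoint (TensorProduct.map A B)
      = TensorProduct.map (LinearMap.adjoint A) (LinearMap.adjoint B) := by
  symm
  rw [LinearMap.eq_adjoint_iff_basis (tb H) (tb H)]
  intro p q
  simp only [tb_apply, TensorProduct.map_tmul, inner_tmul, LinearMap.adjoint_inner_left]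

end TensorIP

theorem copyable_iff_inner (m : H ⊗[ℂ] H →ₗ[ℂ] H) (u : ℂ →ₗ[ℂ] H) (ψ : H) :
    Copyable m u ψ ↔
      (∀ a b : H, ⟪ψ, m (a ⊗ₜ b)⟫_ℂ = ⟪ψ, a⟫_ℂ * ⟪ψ, b⟫_ℂ) ∧ ⟪ψ, u 1⟫_ℂ = 1 := by
  refine and_congr ?_ ?_
  · simp_rw [← LinearMap.adjoint_inner_left m, ← TensorIP.inner_tmul]
    refine ⟨fun h a b => by rw [h], fun h => ?_⟩
    exact InnerProductSpace.ext_inner_right_basis (TensorIP.tb H) fun p => by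
      rw [TensorIP.tb_apply]; exact h _ _
  · rw [← LinearMap.adjoint_inner_left, RCLike.inner_apply, one_mul,
      map_eq_one_iff _ (RingHom.injective _)]

namespace IsFrobenius

variable {m : H ⊗[ℂ] H →ₗ[ℂ] H} {u : ℂ →ₗ[ℂ] H}

omit [FiniteDimensional ℂ H] in
variable (m) in
def mulLeft : H →ₗ[ℂ] H →ₗ[ℂ] H := (TensorProduct.mk ℂ H H).compr₂ m

omit [FiniteDimensional ℂ H] in
@[simp]
theorem mulLeft_apply (a x : H) : mulLeft m a x = m (a ⊗ₜ x) := rfl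

theorem mul_assoc_tmul (h : IsFrobenius m u) (a b c : H) :
    m (m (a ⊗ₜ b) ⊗ₜ c) = m (a ⊗ₜ m (b ⊗ₜ c)) := by
  simpa using LinearMap.congr_fun h.1 ((a ⊗ₜ b) ⊗ₜ c)

theorem mul_comm_tmul (h : IsFrobenius m u) (a b : H) : m (a ⊗ₜ b) = m (b ⊗ₜ a) := by
  simpa using (LinearMap.congr_fun h.2.1 (a ⊗ₜ b)).symm

theorem mulLeft_mul (h : IsFrobenius m u) (a b : H) :
    mulLeft m (m (a ⊗ₜ b)) = mulLeft m a * mulLeft m b :=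
  LinearMap.ext (h.mul_assoc_tmul a b)

theorem commute_mulLeft (h : IsFrobenius m u) (a b : H) :
    Commute (mulLeft m a) (mulLeft m b) := by
  rw [Commute, SemiconjBy, ← h.mulLeft_mul, ← h.mulLeft_mul, h.mul_comm_tmul]

theorem comul_comp_mulLeft (h : IsFrobenius m u) (a : H) :
    LinearMap.adjoint m ∘ₗ mulLeft m a
      = TensorProduct.map (mulLeft m a) LinearMap.id ∘ₗ LinearMap.adjoint m := by
  have hmap : TensorProduct.map m LinearMap.id ∘ₗ (TensorProduct.assoc ℂ H H H).symm.toLinearMap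
      ∘ₗ TensorProduct.mk ℂ H (H ⊗[ℂ] H) a = TensorProduct.map (mulLeft m a) LinearMap.id :=
    TensorProduct.ext' fun _ _ => rfl
  refine LinearMap.ext fun z => ?_
  simpa [← hmap] using (LinearMap.congr_fun h.2.2.2.2 (a ⊗ₜ z)).symm

theorem adjoint_mulLeft_comp_mul (h : IsFrobenius m u) (a : H) :
    LinearMap.adjoint (mulLeft m a) ∘ₗ m
      = m ∘ₗ TensorProduct.map (LinearMap.adjoint (mulLeft m a)) LinearMap.id := by
  have := congrArg LinearMap.adjoint (h.comul_comp_mulLeft a)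
  rwa [LinearMap.adjoint_comp, LinearMap.adjoint_comp, LinearMap.adjoint_adjoint,
    TensorIP.adjoint_map, LinearMap.adjoint_id] at this

theorem adjoint_mulLeft (h : IsFrobenius m u) (a : H) :
    LinearMap.adjoint (mulLeft m a) = mulLeft m (LinearMap.adjoint (mulLeft m a) (u 1)) := by
  refine LinearMap.ext fun x => ?_
  conv_lhs => rw [← h.2.2.1 x]
  simpa using LinearMap.congr_fun (h.adjoint_mulLeft_comp_mul a) (u 1 ⊗ₜ x)

theorem isStarNormal_mulLeft (h : IsFrobenius m u) (a : H) : IsStarNormal (mulLeft m a) :=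
  ⟨by rw [LinearMap.star_eq_adjoint, h.adjoint_mulLeft]; exact h.commute_mulLeft _ _⟩

-- indexed by `h` so that the ring instance on it can use the Frobenius axioms
def Alg (_ : IsFrobenius m u) : Type _ := H

instance (h : IsFrobenius m u) : AddCommGroup h.Alg := inferInstanceAs (AddCommGroup H)

instance (h : IsFrobenius m u) : Module ℂ h.Alg := inferInstanceAs (Module ℂ H)

instance (h : IsFrobenius m u) : FiniteDimensional ℂ h.Alg :=
  inferInstanceAs (FiniteDimensional ℂ H)

def toAlg (h : IsFrobenius m u) : H ≃ₗ[ℂ] h.Alg := LinearEquiv.refl ℂ H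

instance (h : IsFrobenius m u) : CommRing h.Alg where
  mul a b := h.toAlg (m ((h.toAlg.symm a) ⊗ₜ (h.toAlg.symm b)))
  one := h.toAlg (u 1)
  mul_assoc := h.mul_assoc_tmul
  one_mul := h.2.2.1
  mul_one := h.2.2.2.1
  mul_comm := h.mul_comm_tmul
  left_distrib a b c := by
    change h.toAlg (m (_ ⊗ₜ h.toAlg.symm (b + c))) = h.toAlg (m _) + h.toAlg (m _)
    rw [map_add, TensorProduct.tmul_add, map_add, map_add]
  right_distrib a b c := by
    change h.toAlg (m (h.toAlg.symm (a + b) ⊗ₜ _)) = h.toAlg (m _) + h.toAlg (m _)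
    rw [map_add, TensorProduct.add_tmul, map_add, map_add]
  zero_mul a := by
    change h.toAlg (m (h.toAlg.symm 0 ⊗ₜ _)) = 0
    rw [map_zero, TensorProduct.zero_tmul, map_zero, map_zero]
  mul_zero a := by
    change h.toAlg (m (_ ⊗ₜ h.toAlg.symm 0)) = 0
    rw [map_zero, TensorProduct.tmul_zero, map_zero, map_zero]

theorem toAlg_mul (h : IsFrobenius m u) (a b : H) :
    h.toAlg a * h.toAlg b = h.toAlg (m (a ⊗ₜ b)) := rfl

theorem toAlg_one (h : IsFrobenius m u) : (1 : h.Alg) = h.toAlg (u 1) := rfl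

instance (h : IsFrobenius m u) : Algebra ℂ h.Alg :=
  Algebra.ofModule
    (fun r a b => by
      change h.toAlg (m (h.toAlg.symm (r • a) ⊗ₜ _)) = r • h.toAlg (m _)
      rw [map_smul, ← TensorProduct.smul_tmul', map_smul, map_smul])
    (fun r a b => by
      change h.toAlg (m (_ ⊗ₜ h.toAlg.symm (r • b))) = r • h.toAlg (m _)
      rw [map_smul, TensorProduct.tmul_smul, map_smul, map_smul])

instance (h : IsFrobenius m u) : IsReduced h.Alg := by
  refine (isReduced_iff_pow_one_lt 2 one_lt_two).mpr fun a ha => ?_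
  obtain ⟨x, rfl⟩ := h.toAlg.surjective a
  have hsq : m (x ⊗ₜ x) = 0 := by rwa [pow_two, toAlg_mul, LinearEquiv.map_eq_zero_iff] at ha
  have hL : mulLeft m x = 0 :=
    LinearMap.eq_zero_of_isStarNormal_of_mul_self_eq_zero (h.isStarNormal_mulLeft x)
      (by rw [← h.mulLeft_mul, hsq, map_zero])
  rw [← h.2.2.2.1 x, ← mulLeft_apply, hL, LinearMap.zero_apply, map_zero]

def copyableOfAlgHom (h : IsFrobenius m u) (χ : h.Alg →ₐ[ℂ] ℂ) : H :=
  (InnerProductSpace.toDual ℂ H).symm (χ.toLinearMap ∘ₗ h.toAlg.toLinearMap).toContinuousLinearMap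

theorem inner_copyableOfAlgHom (h : IsFrobenius m u) (χ : h.Alg →ₐ[ℂ] ℂ) (x : H) :
    ⟪h.copyableOfAlgHom χ, x⟫_ℂ = χ (h.toAlg x) :=
  InnerProductSpace.toDual_symm_apply

theorem copyable_copyableOfAlgHom (h : IsFrobenius m u) (χ : h.Alg →ₐ[ℂ] ℂ) :
    Copyable m u (h.copyableOfAlgHom χ) := by
  simp only [copyable_iff_inner, inner_copyableOfAlgHom, ← toAlg_mul, ← toAlg_one, map_mul,
    map_one, implies_true, and_self]

def copyableEquivAlgHom (h : IsFrobenius m u) :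
    {ψ : H // Copyable m u ψ} ≃ (h.Alg →ₐ[ℂ] ℂ) where
  toFun ψ := AlgHom.ofLinearMap (innerₛₗ ℂ (ψ : H) ∘ₗ h.toAlg.symm.toLinearMap)
    ((copyable_iff_inner m u ψ).mp ψ.2).2 fun _ _ => ((copyable_iff_inner m u ψ).mp ψ.2).1 _ _
  invFun χ := ⟨h.copyableOfAlgHom χ, h.copyable_copyableOfAlgHom χ⟩
  left_inv ψ := Subtype.ext <| ext_inner_right ℂ fun x => h.inner_copyableOfAlgHom _ x
  right_inv χ := AlgHom.ext fun a => by
    obtain ⟨x, rfl⟩ := h.toAlg.surjective a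
    exact h.inner_copyableOfAlgHom χ x

theorem copyableEquivAlgHom_apply (h : IsFrobenius m u) (ψ : {ψ : H // Copyable m u ψ})
    (x : H) :
    h.copyableEquivAlgHom ψ (h.toAlg x) = ⟪(ψ : H), x⟫_ℂ := rfl

theorem linearIndependent_copyable (h : IsFrobenius m u) :
    LinearIndependent ℂ (Subtype.val : {ψ : H // Copyable m u ψ} → H) := by
  have hχ := (linearIndependent_algHom_toLinearMap ℂ h.Alg ℂ).comp _
    h.copyableEquivAlgHom.injective
  rw [linearIndependent_iff'] at hχ ⊢
  intro s g hg i hi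
  -- `ψ ↦ ⟪ψ, -⟫` is conjugate-linear
  have := hχ s (fun j => conj (g j)) (LinearMap.ext fun a => ?_) i hi
  · simpa using this
  · obtain ⟨x, rfl⟩ := h.toAlg.surjective a
    simp [copyableEquivAlgHom_apply, ← inner_smul_left, ← sum_inner, hg]

theorem span_copyable (h : IsFrobenius m u) :
    Submodule.span ℂ (Set.range (Subtype.val : {ψ : H // Copyable m u ψ} → H)) = ⊤ := by
  rw [← Submodule.orthogonal_eq_bot_iff, Submodule.eq_bot_iff]
  intro x hx
  have : h.toAlg x = 0 := IsAlgClosed.eq_zero_of_forall_algHom_apply_eq_zero fun χ => by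
    rw [← h.copyableEquivAlgHom.apply_symm_apply χ, copyableEquivAlgHom_apply]
    exact (Submodule.mem_orthogonal _ x).mp hx _ (Submodule.subset_span ⟨_, rfl⟩)
  exact h.toAlg.map_eq_zero_iff.mp this

def copyableBasis (h : IsFrobenius m u) : Module.Basis {ψ : H // Copyable m u ψ} ℂ H :=
  Module.Basis.mk h.linearIndependent_copyable h.span_copyable.ge

@[simp]
theorem copyableBasis_apply (h : IsFrobenius m u) (ψ : {ψ : H // Copyable m u ψ}) :
    h.copyableBasis ψ = ψ :=
  Module.Basis.mk_apply _ _ _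

end IsFrobenius

section ComonoidHom

variable {K : Type*} [NormedAddCommGroup K] [InnerProductSpace ℂ K] [FiniteDimensional ℂ K]
  {mH : H ⊗[ℂ] H →ₗ[ℂ] H} {uH : ℂ →ₗ[ℂ] H} {mK : K ⊗[ℂ] K →ₗ[ℂ] K} {uK : ℂ →ₗ[ℂ] K}

variable (mH uH mK uK) in
def IsComonoidHom (f : H →ₗ[ℂ] K) : Prop :=
  LinearMap.adjoint mK ∘ₗ f = TensorProduct.map f f ∘ₗ LinearMap.adjoint mH
    ∧ LinearMap.adjoint uK ∘ₗ f = LinearMap.adjoint uH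

theorem IsComonoidHom.copyable {f : H →ₗ[ℂ] K} (hf : IsComonoidHom mH uH mK uK f) {ψ : H}
    (hψ : Copyable mH uH ψ) : Copyable mK uK (f ψ) := by
  constructor
  · rw [← LinearMap.comp_apply, hf.1, LinearMap.comp_apply, hψ.1, TensorProduct.map_tmul]
  · rw [← LinearMap.comp_apply, hf.2, hψ.2]

theorem isComonoidHom_iff_copyable (hH : IsFrobenius mH uH) (f : H →ₗ[ℂ] K) :
    IsComonoidHom mH uH mK uK f ↔ ∀ ψ, Copyable mH uH ψ → Copyable mK uK (f ψ) := by
  refine ⟨fun hf _ => hf.copyable, fun hf => ⟨?_, ?_⟩⟩ <;>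
    refine hH.copyableBasis.ext fun ψ => ?_
  · simp [(hf _ ψ.2).1, ψ.2.1]
  · simp [(hf _ ψ.2).2, ψ.2.2]

end ComonoidHom

theorem comonoid_hom_equiv_functions_general
    {K : Type*} [NormedAddCommGroup K] [InnerProductSpace ℂ K] [FiniteDimensional ℂ K]
    (mH : H ⊗[ℂ] H →ₗ[ℂ] H) (uH : ℂ →ₗ[ℂ] H) (mK : K ⊗[ℂ] K →ₗ[ℂ] K) (uK : ℂ →ₗ[ℂ] K)
    (hH : IsFrobenius mH uH) :
    (∀ f : H →ₗ[ℂ] K,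
        (LinearMap.adjoint mK ∘ₗ f = TensorProduct.map f f ∘ₗ LinearMap.adjoint mH
            ∧ LinearMap.adjoint uK ∘ₗ f = LinearMap.adjoint uH) →
        ∀ ψ : H, Copyable mH uH ψ → Copyable mK uK (f ψ))
      ∧ ∃ Φ : {f : H →ₗ[ℂ] K //
            LinearMap.adjoint mK ∘ₗ f = TensorProduct.map f f ∘ₗ LinearMap.adjoint mH
              ∧ LinearMap.adjoint uK ∘ₗ f = LinearMap.adjoint uH} →
          ({ψ : H // Copyable mH uH ψ} → {χ : K // Copyable mK uK χ}),
          (∀ f ψ, (Φ f ψ : K) = (f : H →ₗ[ℂ] K) ψ) ∧ Function.Bijective Φ := by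
  refine ⟨fun f hf ψ => IsComonoidHom.copyable hf,
    fun f ψ => ⟨f.1 ψ, IsComonoidHom.copyable f.2 ψ.2⟩, fun _ _ => rfl, ?_, ?_⟩
  · intro f g hfg
    exact Subtype.ext <| hH.copyableBasis.ext fun ψ => by
      simpa using congrArg Subtype.val (congrFun hfg ψ)
  · intro G
    let f := hH.copyableBasis.constr ℂ fun ψ => (G ψ : K)
    have hf (ψ : {ψ : H // Copyable mH uH ψ}) : f ψ = G ψ := by
      simpa using hH.copyableBasis.constr_basis ℂ _ ψ
    refine ⟨⟨f, (isComonoidHom_iff_copyable hH f).mpr fun ψ hψ => ?_⟩,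
      funext fun ψ => Subtype.ext (hf ψ)⟩
    rw [hf ⟨ψ, hψ⟩]
    exact (G ⟨ψ, hψ⟩).2

/-- Comonoid homomorphisms between commutative †-Frobenius monoids map copyable elements to
copyable elements, and restriction to copyable elements is a bijection from comonoid
homomorphisms `H → K` to functions between the sets of copyable elements. -/
theorem comonoid_hom_equiv_functions
    {K : Type*} [NormedAddCommGroup K] [InnerProductSpace ℂ K] [FiniteDimensional ℂ K]
    (mH : H ⊗[ℂ] H →ₗ[ℂ] H) (uH : ℂ →ₗ[ℂ] H) (mK : K ⊗[ℂ] K →ₗ[ℂ] K) (uK : ℂ →ₗ[ℂ] K)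
    (hH : IsFrobenius mH uH) (hK : IsFrobenius mK uK) :
    (∀ f : H →ₗ[ℂ] K,
        (LinearMap.adjoint mK ∘ₗ f = TensorProduct.map f f ∘ₗ LinearMap.adjoint mH
            ∧ LinearMap.adjoint uK ∘ₗ f = LinearMap.adjoint uH) →
        ∀ ψ : H, Copyable mH uH ψ → Copyable mK uK (f ψ))
      ∧ ∃ Φ : {f : H →ₗ[ℂ] K //
            LinearMap.adjoint mK ∘ₗ f = TensorProduct.map f f ∘ₗ LinearMap.adjoint mH
              ∧ LinearMap.adjoint uK ∘ₗ f = LinearMap.adjoint uH} →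
          ({ψ : H // Copyable mH uH ψ} → {χ : K // Copyable mK uK χ}),
          (∀ f ψ, (Φ f ψ : K) = (f : H →ₗ[ℂ] K) ψ) ∧ Function.Bijective Φ :=
  comonoid_hom_equiv_functions_general mH uH mK uK hH
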